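/- arXiv:2010.09357 — 8 statements merged into one kernel-verified Lean document; each statement's English description precedes it below -/
import Mathlib

section
/- Let X be a real Banach space and let x ∈ S_X be a Δ-point. Then for every ε > 0 and every slice S(f, α) of B_X (with f ∈ X*, ‖f‖ = 1 and 0 < α < 1) such that x ∈ S(f, α) and α/(1 − α) < ε, there exist g ∈ X* with ‖g‖ = 1 and α₁ > 0 such that S(g, α₁) ⊆ S(f, α) and ‖x − z‖ ≥ 2 − ε for all z ∈ S(g, α₁). -/
/-!
Shrink the slice slightly so that `x` lies in `S(f, β)` with `β < α`. The Δ-point property gives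
`y ∈ S(f, β)` with `‖x - y‖ > 2 - δ`; let `h` be a functional of norm at most one with
`h (x - y) = ‖x - y‖`, so that `h x ≈ 1` and `h y ≈ -1`. Then `f - h` almost attains `2` at `y`, and the slice of the normalised
functional `(f - h) / ‖f - h‖` consists of points `z` with `f z ≈ 1` and `h z ≈ -1`. The first
keeps `z` inside `S(f, α)`, the second gives `‖x - z‖ ≥ h x - h z ≈ 2`.
-/

variable {X : Type*} [NormedAddCommGroup X] [NormedSpace ℝ X] [CompleteSpace X]

/-- The ballSlice `S(f, α)` of the closed unit ball of `X`. -/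
def ballSlice (f : X →L[ℝ] ℝ) (α : ℝ) : Set X := {y | ‖y‖ ≤ 1 ∧ f y > 1 - α}

/-- `x` is a Δ-point: for every ballSlice of the unit ball containing `x` and every `ε > 0`
there is a point of the ballSlice at distance `> 2 - ε` from `x`. -/
def IsDeltaPoint (x : X) : Prop :=
  ∀ (f : X →L[ℝ] ℝ), ‖f‖ = 1 → ∀ α : ℝ, 0 < α → x ∈ ballSlice f α →
    ∀ ε : ℝ, 0 < ε → ∃ y ∈ ballSlice f α, ‖x - y‖ > 2 - ε

section

variable {E : Type*} [NormedAddCommGroup E] [NormedSpace ℝ E]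

lemma abs_apply_le_one {f : E →L[ℝ] ℝ} (hf : ‖f‖ ≤ 1) {y : E} (hy : ‖y‖ ≤ 1) : |f y| ≤ 1 :=
  (f.le_opNorm y).trans (mul_le_one₀ hf (norm_nonneg y) hy)

lemma apply_le_norm {f : E →L[ℝ] ℝ} (hf : ‖f‖ ≤ 1) (y : E) : f y ≤ ‖y‖ :=
  (le_abs_self _).trans ((f.le_opNorm y).trans (mul_le_of_le_one_left (norm_nonneg y) hf))

lemma apply_le_opNorm (f : E →L[ℝ] ℝ) {y : E} (hy : ‖y‖ ≤ 1) : f y ≤ ‖f‖ :=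
  (le_abs_self _).trans ((f.le_opNorm y).trans (mul_le_of_le_one_right (norm_nonneg f) hy))

lemma ballSlice_mono (f : E →L[ℝ] ℝ) {α β : ℝ} (h : α ≤ β) : ballSlice f α ⊆ ballSlice f β :=
  fun _ ⟨hy, hfy⟩ ↦ ⟨hy, by linarith⟩

lemma exists_pos_lt_mem_ballSlice {f : E →L[ℝ] ℝ} (hf : ‖f‖ ≤ 1) {α : ℝ} (hα : 0 < α) {x : E}
    (hx : x ∈ ballSlice f α) : ∃ β, 0 < β ∧ β < α ∧ x ∈ ballSlice f β := by
  obtain ⟨hx1, hfx⟩ := hx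
  have hfx1 : f x ≤ 1 := (abs_le.mp (abs_apply_le_one hf hx1)).2
  exact ⟨(α + 1 - f x) / 2, by linarith, by linarith, hx1, by linarith⟩

lemma ballSlice_smul_inv_norm {φ : E →L[ℝ] ℝ} (hφ : 0 < ‖φ‖) (c : ℝ) :
    ballSlice (‖φ‖⁻¹ • φ) (1 - c / ‖φ‖) = {y | ‖y‖ ≤ 1 ∧ c < φ y} := by
  ext y
  simp only [ballSlice, Set.mem_ofPred_eq, smul_apply, smul_eq_mul, sub_sub_cancel,
    gt_iff_lt, ← div_eq_inv_mul, div_lt_div_iff_of_pos_right hφ]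

lemma IsDeltaPoint.exists_ballSlice_far {x : E} (hΔ : IsDeltaPoint x) {f : E →L[ℝ] ℝ}
    (hf : ‖f‖ = 1) {β δ : ℝ} (hβ : 0 < β) (hδ : 0 < δ) (hβδ : β + δ < 2)
    (hxS : x ∈ ballSlice f β) :
    ∃ (g : E →L[ℝ] ℝ) (α₁ : ℝ), ‖g‖ = 1 ∧ 0 < α₁ ∧ ballSlice g α₁ ⊆ ballSlice f (β + δ) ∧
      ∀ z ∈ ballSlice g α₁, 2 - β - 2 * δ < ‖x - z‖ := by
  obtain ⟨y, ⟨hy1, hfy⟩, hxy⟩ := hΔ f hf β hβ hxS δ hδ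
  obtain ⟨h, hh, hhxy⟩ := exists_dual_vector'' ℝ (x - y)
  have hhxy : h x - h y = ‖x - y‖ := by rw [← map_sub]; exact hhxy
  have hhx : 1 - δ < h x := by linarith [(abs_le.mp (abs_apply_le_one hh hy1)).1]
  have hhy : h y < δ - 1 := by linarith [(abs_le.mp (abs_apply_le_one hh hxS.1)).2]
  set φ := f - h
  have hφ : 2 - β - δ < ‖φ‖ :=
    calc 2 - β - δ < f y - h y := by linarith
      _ ≤ ‖φ‖ := apply_le_opNorm φ hy1
  have hφ0 : 0 < ‖φ‖ := by linarith
  refine ⟨‖φ‖⁻¹ • φ, 1 - (2 - β - δ) / ‖φ‖, norm_smul_inv_norm (norm_pos_iff.mp hφ0),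
    sub_pos.mpr ((div_lt_one hφ0).mpr hφ), ?_, ?_⟩ <;> rw [ballSlice_smul_inv_norm hφ0]
  · rintro z ⟨hz1, hφz⟩
    have hhz := (abs_le.mp (abs_apply_le_one hh hz1)).1
    exact ⟨hz1, by simp only [φ, sub_apply] at hφz; linarith⟩
  · rintro z ⟨hz1, hφz⟩
    have hfz := (abs_le.mp (abs_apply_le_one hf.le hz1)).2
    simp only [φ, sub_apply] at hφz
    calc 2 - β - 2 * δ < h x - h z := by linarith
      _ = h (x - z) := (map_sub h x z).symm
      _ ≤ ‖x - z‖ := apply_le_norm hh (x - z)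

end

theorem delta_point_nested_slice_general (x : X) (hΔ : IsDeltaPoint x)
    (ε : ℝ) (f : X →L[ℝ] ℝ) (hf : ‖f‖ = 1)
    (α : ℝ) (hα0 : 0 < α) (hα1 : α < 1) (hxS : x ∈ ballSlice f α)
    (hαε : α / (1 - α) < ε) :
    ∃ (g : X →L[ℝ] ℝ) (α₁ : ℝ), ‖g‖ = 1 ∧ 0 < α₁ ∧
      ballSlice g α₁ ⊆ ballSlice f α ∧ ∀ z ∈ ballSlice g α₁, ‖x - z‖ ≥ 2 - ε := by
  have hα_lt_ε : α < ε := by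
    have := (div_lt_iff₀ (sub_pos.mpr hα1)).mp hαε
    nlinarith
  obtain ⟨β, hβ0, hβα, hxβ⟩ := exists_pos_lt_mem_ballSlice hf.le hα0 hxS
  obtain ⟨g, α₁, hg, hα₁, hsub, hfar⟩ :=
    hΔ.exists_ballSlice_far hf hβ0 (by linarith : 0 < (α - β) / 2) (by linarith) hxβ
  refine ⟨g, α₁, hg, hα₁, hsub.trans (ballSlice_mono f (by linarith)), fun z hz ↦ ?_⟩
  linarith [hfar z hz]

theorem delta_point_nested_slice (x : X) (hx : ‖x‖ = 1) (hΔ : IsDeltaPoint x)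
    (ε : ℝ) (hε : 0 < ε) (f : X →L[ℝ] ℝ) (hf : ‖f‖ = 1)
    (α : ℝ) (hα0 : 0 < α) (hα1 : α < 1) (hxS : x ∈ ballSlice f α)
    (hαε : α / (1 - α) < ε) :
    ∃ (g : X →L[ℝ] ℝ) (α₁ : ℝ), ‖g‖ = 1 ∧ 0 < α₁ ∧
      ballSlice g α₁ ⊆ ballSlice f α ∧ ∀ z ∈ ballSlice g α₁, ‖x - z‖ ≥ 2 - ε :=
  delta_point_nested_slice_general x hΔ ε f hf α hα0 hα1 hxS hαε
end

section
/- Let (M, e) be a pointed metric space, let x₁, …, x_m ∈ M and λ₁, …, λ_m ∈ ℝ be such that sup{ Σ_{i=1}^m λᵢ·f(xᵢ) : f : M → ℝ is 1-Lipschitz and f(e) = 0 } = 1. Let (u_n) and (v_n) be sequences in M with u_n ≠ v_n for all n and d(u_n, v_n) → 0. Then for every ε > 0 there exists N such that for all n ≥ N there is a 1-Lipschitz function f : M → ℝ with f(e) = 0 satisfying Σ_{i=1}^m λᵢ·f(xᵢ) + (f(u_n) − f(v_n))/d(u_n, v_n) > 2 − ε. (This expresses that ‖μ + m_{u_n,v_n}‖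 → 2 in the Lipschitz-free space over M, where μ = Σ λᵢ δ_{xᵢ} has norm one.) -/
/-!
Take a norming function `f` for `μ` (with `∑ λᵢ f(xᵢ)` close to `1`) and raise it near `u`
by the cone `y ↦ f(v) + d(u, v) - d(y, u)`. The maximum of `f` and the cone is still
`1`-Lipschitz, agrees with `f` at `v` and exceeds `f(v)` by `d(u, v)` at `u`, so it has slope
at least `1` on the molecule `m_{u,v}`. It lies between `f` and `f + 2 d(u, v)`, so after
subtracting its value at `e` it differs from `f` by at most `2 d(u, v)` everywhere, and its
pairing with `μ` drops by at most `2 d(u, v) ∑ |λᵢ|`, which tends to `0`.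
-/

open Filter

section RaiseAt

variable {M : Type*} [MetricSpace M] (f : M → ℝ) (p q : M)

noncomputable def raiseAt : M → ℝ :=
  fun y => max (f y) (f q + dist p q - dist y p)

theorem lipschitzWith_raiseAt {f : M → ℝ} (hf : LipschitzWith 1 f) :
    LipschitzWith 1 (raiseAt f p q) := by
  unfold raiseAt
  simpa using hf.max ((LipschitzWith.const (f q + dist p q)).sub (LipschitzWith.dist_left p))

theorem le_raiseAt (y : M) : f y ≤ raiseAt f p q y :=
  le_max_left _ _

theorem raiseAt_le {f : M → ℝ} (hf : LipschitzWith 1 f) (y : M) :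
    raiseAt f p q y ≤ f y + 2 * dist p q := by
  refine max_le (by linarith [dist_nonneg (x := p) (y := q)]) ?_
  have hfq : f q ≤ f y + dist q y := by simpa using hf.le_add_mul q y
  linarith [dist_triangle q p y, dist_comm p q, dist_comm y p]

theorem raiseAt_right : raiseAt f p q q = f q := by
  simp [raiseAt, dist_comm q p]

theorem add_dist_le_raiseAt_left : f q + dist p q ≤ raiseAt f p q p := by
  simp [raiseAt]

end RaiseAt

theorem exists_lipschitzWith_one_le_slope {M : Type*} [MetricSpace M] {f : M → ℝ} {e p q : M}
    (hf : LipschitzWith 1 f) (hfe : f e = 0) (hpq : p ≠ q) :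
    ∃ g : M → ℝ, LipschitzWith 1 g ∧ g e = 0 ∧ (∀ y, |g y - f y| ≤ 2 * dist p q) ∧
      1 ≤ (g p - g q) / dist p q := by
  set r := raiseAt f p q
  refine ⟨fun y => r y - r e,
    by simpa using (lipschitzWith_raiseAt p q hf).sub (LipschitzWith.const (r e)),
    sub_self _, fun y => ?_, ?_⟩
  · rw [abs_sub_le_iff]
    constructor <;>
      linarith [le_raiseAt f p q y, le_raiseAt f p q e, raiseAt_le p q hf y, raiseAt_le p q hf e]
  · rw [le_div_iff₀ (dist_pos.2 hpq), one_mul]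
    linarith [add_dist_le_raiseAt_left f p q, raiseAt_right f p q]

theorem Finset.sum_mul_sub_le_of_abs_sub_le {ι : Type*} (s : Finset ι) (lam f g : ι → ℝ)
    {δ : ℝ} (h : ∀ i ∈ s, |g i - f i| ≤ δ) :
    ∑ i ∈ s, lam i * f i - δ * ∑ i ∈ s, |lam i| ≤ ∑ i ∈ s, lam i * g i := by
  have hdiff : ∑ i ∈ s, lam i * (f i - g i) ≤ ∑ i ∈ s, δ * |lam i| :=
    Finset.sum_le_sum fun i hi => calc
      lam i * (f i - g i) ≤ |lam i| * |g i - f i| := by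
        rw [abs_sub_comm, ← abs_mul]; exact le_abs_self _
      _ ≤ δ * |lam i| :=
        (mul_le_mul_of_nonneg_left (h i hi) (abs_nonneg _)).trans_eq (mul_comm _ _)
  simp only [mul_sub, Finset.sum_sub_distrib, ← Finset.mul_sum] at hdiff
  linarith

/-- If `μ = ∑ λᵢ δ_{xᵢ}` has Lipschitz-free norm one and `d(uₙ, vₙ) → 0` with `uₙ ≠ vₙ`,
then `‖μ + m_{uₙ,vₙ}‖ → 2`. -/
theorem norm_add_molecule_tendsto_two {M : Type*} [MetricSpace M] (e : M)
    (m : ℕ) (x : Fin m → M) (lam : Fin m → ℝ)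
    (hnorm : IsLUB {s : ℝ | ∃ f : M → ℝ, LipschitzWith 1 f ∧ f e = 0 ∧
      s = ∑ i, lam i * f (x i)} 1)
    (u v : ℕ → M) (huv : ∀ n, u n ≠ v n)
    (hd : Tendsto (fun n => dist (u n) (v n)) atTop (nhds 0)) :
    ∀ ε : ℝ, 0 < ε → ∃ N : ℕ, ∀ n ≥ N, ∃ f : M → ℝ, LipschitzWith 1 f ∧ f e = 0 ∧
      (∑ i, lam i * f (x i)) + (f (u n) - f (v n)) / dist (u n) (v n) > 2 - ε := by
  intro ε hε
  obtain ⟨_, ⟨f, hf, hfe, rfl⟩, hfμ, -⟩ :=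
    hnorm.exists_between (sub_lt_self 1 (half_pos hε))
  set C := ∑ i, |lam i|
  have hsmall : ∀ᶠ n in atTop, 2 * dist (u n) (v n) * C < ε / 2 := by
    have := (hd.const_mul 2).mul_const C
    rw [mul_zero, zero_mul] at this
    exact this.eventually (gt_mem_nhds (half_pos hε))
  obtain ⟨N, hN⟩ := eventually_atTop.1 hsmall
  refine ⟨N, fun n hn => ?_⟩
  obtain ⟨g, hg, hge, hgf, hslope⟩ := exists_lipschitzWith_one_le_slope hf hfe (huv n)
  refine ⟨g, hg, hge, ?_⟩
  have hpair := Finset.univ.sum_mul_sub_le_of_abs_sub_le lam (fun i => f (x i)) (fun i => g (x i))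
    fun i _ => hgf (x i)
  linarith [hN n hn]
end

section
/- Let M be a compact metric space and let x ≠ y ∈ M. The following are equivalent: (1) for every function f : M → ℝ with Lipschitz constant exactly 1, every α ∈ (0, 1) and every ε > 0, there exist u ≠ v ∈ M with f(u) − f(v) > (1 − α)·d(u, v) and ‖m_{x,y} − m_{u,v}‖ > 2 − ε; (2) for all u ≠ v ∈ M such that every z ∈ M with d(u, z) + d(z, v) = d(u, v) satisfies z ∈ {u, v}, one has d(x, y) + d(u, v) ≤ min{d(x, u) + d(y, v), d(x, v) + d(y, u)}. (Condition (1) says exactly that the molecule m_{x,y} is a Daugavet point of the unit ball of the Lipschitz-free space over M.) -/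
/-!
Write `e(p, q) = d(x, y) + d(p, q) - d(x, p) - d(y, q)`. Every 1-Lipschitz `h` gives
`‖m_{x,y} - m_{p,q}‖ ≤ 2 - e(p, q) / max (d(x, y), d(p, q))`, and a 1-Lipschitz `h` interpolating
four suitable values at `x, y, u, v` gives `‖m_{x,y} - m_{u,v}‖ ≥ 2 - max 0 e(u, v) / d(x, y)`.

(2) ⇒ (1): by compactness, a function of Lipschitz constant 1 has a pair of slope close to 1 that
is either short, so that `e` is at most twice its length, or of least length among such pairs,
hence with no point strictly between its ends, so that `e ≤ 0` by (2).

(1) ⇒ (2): suppose `e(u, v) > 0` at such an extreme pair. Let `f(p)` be the least cost of a chain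
from `p` to `v` when a step `(p, q)` costs `d(p, q)` if `e(p, q) > e(u, v) / 2` and `d(p, q) / 2`
otherwise. By compactness, almost geodesic chains from `u` to `v` stay close to `u` or to `v`, so
they pay full price for the jump between the two, and `f(u) - f(v) > d(u, v) / 2`. Rescaled to
Lipschitz constant 1, `f` is steep only on pairs with `e(p, q) > e(u, v) / 2`, and for those
`‖m_{x,y} - m_{p,q}‖ ≤ 2 - e(u, v) / (2 diam M)`, contradicting (1).
-/

open NNReal

theorem LipschitzWith.exists_isLeast {α β : Type*} [PseudoMetricSpace α] [PseudoMetricSpace β]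
    {f : α → β} {K : ℝ≥0} (hf : LipschitzWith K f) :
    ∃ L : ℝ≥0, IsLeast {K | LipschitzWith K f} L := by
  set S := {K : ℝ≥0 | LipschitzWith K f}
  have hS : S = ⋂ a, ⋂ b, {K : ℝ≥0 | dist (f a) (f b) ≤ K * dist a b} := by
    ext K
    simp [S, lipschitzWith_iff_dist_le_mul]
  have hclosed : IsClosed S := by
    rw [hS]
    exact isClosed_iInter fun a => isClosed_iInter fun b =>
      isClosed_le continuous_const (NNReal.continuous_coe.mul continuous_const)
  exact ⟨sInf S, hclosed.csInf_mem ⟨K, hf⟩ (OrderBot.bddBelow S),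
    fun _ hK => csInf_le (OrderBot.bddBelow S) hK⟩

theorem LipschitzWith.exists_pos_isLeast_div {α : Type*} [PseudoMetricSpace α]
    {f : α → ℝ} {K : ℝ≥0} (hf : LipschitzWith K f) {a b : α} (hab : f a ≠ f b) :
    ∃ L : ℝ, 0 < L ∧ IsLeast {K | LipschitzWith K fun z => f z / L} 1 := by
  obtain ⟨L, hL, hLmin⟩ := hf.exists_isLeast
  have hL0 : 0 < (L : ℝ) := by
    refine lt_of_le_of_ne L.2 fun h0 => hab ?_
    have := hL.dist_le_mul a b
    rw [← h0, zero_mul] at this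
    exact dist_le_zero.1 this
  refine ⟨L, hL0, LipschitzWith.of_le_add fun z w => ?_, fun K' hK' => ?_⟩
  · rw [div_add' _ _ _ hL0.ne']
    gcongr
    linarith [hL.le_add_mul z w]
  · have hfK' : LipschitzWith (K' * L) f := LipschitzWith.of_le_add_mul _ fun z w => by
      have := hK'.le_add_mul z w
      rw [div_le_iff₀ hL0, add_mul, div_mul_cancel₀ _ hL0.ne'] at this
      push_cast
      linarith
    exact (le_mul_iff_one_le_left (NNReal.coe_pos.1 hL0)).1 (hLmin hfK')

section chainCost

variable {α : Type*} (w : α → α → ℝ) (v : α)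

/-- The `w`-cost of the chain `p, l₁, …, lₙ, v`. -/
def chainCost : α → List α → ℝ
  | p, [] => w p v
  | p, z :: l => w p z + chainCost z l

@[simp] theorem chainCost_nil (p : α) : chainCost w v p [] = w p v := rfl

@[simp] theorem chainCost_cons (p z : α) (l : List α) :
    chainCost w v p (z :: l) = w p z + chainCost w v z l := rfl

noncomputable def chainDist (p : α) : ℝ := ⨅ l : List α, chainCost w v p l

variable {w v}

theorem chainDist_le (hw : ∀ p, BddBelow (Set.range (chainCost w v p))) (p : α) (l : List α) :
    chainDist w v p ≤ chainCost w v p l :=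
  ciInf_le (hw p) l

theorem chainDist_le_add (hw : ∀ p, BddBelow (Set.range (chainCost w v p))) (p q : α) :
    chainDist w v p ≤ w p q + chainDist w v q := by
  have : chainDist w v p - w p q ≤ chainDist w v q :=
    le_ciInf fun l => by linarith [chainDist_le hw p (q :: l), chainCost_cons w v p q l]
  linarith

end chainCost

section PseudoMetricSpace

variable {M : Type*} [PseudoMetricSpace M]

theorem exists_mul_dist_lt_sub_of_forall_one_le {f : M → ℝ}
    (hf : ∀ K : ℝ≥0, LipschitzWith K f → 1 ≤ K) {β : ℝ} (hβ : β < 1) :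
    ∃ p q, β * dist p q < f p - f q := by
  by_contra! h
  have := hf _ (LipschitzWith.of_le_add_mul' β fun p q => by linarith [h p q])
  exact absurd this (not_le.2 (Real.toNNReal_lt_one.2 hβ))

theorem exists_lipschitzWith_one_interpolating {ι : Type*} (a : ι → M) (c : ι → ℝ)
    (hc : ∀ i j, c i - c j ≤ dist (a i) (a j)) :
    ∃ h : M → ℝ, LipschitzWith 1 h ∧ ∀ i, h (a i) = c i := by
  classical
  have hext : ∀ i, Function.extend a c 0 (a i) = c i := by
    intro i
    have hex : ∃ j, a j = a i := ⟨i, rfl⟩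
    rw [Function.extend_def, dif_pos hex]
    have h1 := hc hex.choose i
    have h2 := hc i hex.choose
    rw [hex.choose_spec, dist_self] at h1 h2
    linarith
  have hlip : LipschitzOnWith 1 (Function.extend a c 0) (Set.range a) := by
    refine LipschitzOnWith.of_le_add ?_
    rintro _ ⟨i, rfl⟩ _ ⟨j, rfl⟩
    rw [hext, hext]
    linarith [hc i j]
  obtain ⟨h, hh, heq⟩ := hlip.extend_real
  exact ⟨h, hh, fun i => (heq ⟨i, rfl⟩).symm.trans (hext i)⟩

theorem dist_le_chainCost_dist (v p : M) (l : List M) : dist p v ≤ chainCost dist v p l := by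
  induction l generalizing p with
  | nil => exact le_rfl
  | cons z l ih => exact (dist_triangle p z v).trans (add_le_add_right (ih z) _)

theorem half_chainCost_dist_le {w : M → M → ℝ} (hw : ∀ p q, dist p q / 2 ≤ w p q) (v p : M)
    (l : List M) : chainCost dist v p l / 2 ≤ chainCost w v p l := by
  induction l generalizing p with
  | nil => exact hw p v
  | cons z l ih =>
    simp only [chainCost_cons]
    linarith [hw p z, ih z]

theorem bddBelow_range_chainCost {w : M → M → ℝ} (hw : ∀ p q, dist p q / 2 ≤ w p q) (v p : M) :
    BddBelow (Set.range (chainCost w v p)) :=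
  ⟨0, by
    rintro _ ⟨l, rfl⟩
    linarith [half_chainCost_dist_le hw v p l, dist_le_chainCost_dist v p l,
      dist_nonneg (x := p) (y := v)]⟩

/-- A chain from near `u` to `v` that stays near `u` or near `v` has to jump from one cluster to
the other in a single step, which `w` charges at full length. -/
theorem chainCost_ge_of_cluster {w : M → M → ℝ} (hw : ∀ p q, dist p q / 2 ≤ w p q) {u v : M}
    {r ξ : ℝ} (hjump : ∀ p q, dist p u < r → dist q v < r → dist p q ≤ w p q)
    (hcluster : ∀ z, dist u z + dist z v < dist u v + ξ → dist z u < r ∨ dist z v < r)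
    (l : List M) (p : M) (hp : dist p u < r)
    (hbudget : dist u p + chainCost dist v p l < dist u v + ξ) :
    (chainCost dist v p l + dist u v) / 2 - r ≤ chainCost w v p l := by
  induction l generalizing p with
  | nil =>
    have hvv : dist v v < r := by rw [dist_self]; exact dist_nonneg.trans_lt hp
    simp only [chainCost_nil]
    linarith [hjump p v hp hvv, dist_triangle u p v, dist_comm u p, dist_nonneg (x := p) (y := u)]
  | cons z l ih =>
    simp only [chainCost_cons] at hbudget ⊢
    have hupz := dist_triangle u p z
    by_cases hz : dist z u < r
    · linarith [ih z hz (by linarith), hw p z]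
    · have hzv : dist z v < r :=
        (hcluster z (by linarith [dist_le_chainCost_dist v z l])).resolve_left hz
      linarith [hjump p z hp hzv, half_chainCost_dist_le hw v z l, dist_triangle u p v,
        dist_triangle p z v, dist_comm u p]

theorem exists_pos_forall_near_endpoints [CompactSpace M] {u v : M}
    (hext : ∀ z, dist u z + dist z v = dist u v → z = u ∨ z = v) {r : ℝ} (hr : 0 < r) :
    ∃ ξ > 0, ∀ z, dist u z + dist z v < dist u v + ξ → dist z u < r ∨ dist z v < r := by
  set T := {z : M | r ≤ dist z u ∧ r ≤ dist z v}
  have hT : IsClosed T :=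
    (isClosed_le continuous_const (continuous_id.dist continuous_const)).inter
      (isClosed_le continuous_const (continuous_id.dist continuous_const))
  have hgt : ∀ z ∈ T, dist u v < dist u z + dist z v := by
    rintro z ⟨hzu, hzv⟩
    refine (dist_triangle u z v).lt_of_ne fun heq => ?_
    rcases hext z heq.symm with rfl | rfl <;> simp only [dist_self] at hzu hzv <;> linarith
  have hcont : Continuous fun z => dist u z + dist z v := by fun_prop
  obtain ⟨a, hua, ha⟩ := hT.isCompact.exists_forall_le' hcont.continuousOn hgt
  refine ⟨a - dist u v, by linarith, fun z hz => ?_⟩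
  by_contra! hzT
  linarith [ha z hzT]

end PseudoMetricSpace

section MetricSpace

variable {M : Type*} [MetricSpace M]

theorem exists_lipschitzWith_one_slope_sub_slope_eq {x y u v : M} (hxy : x ≠ y) (huv : u ≠ v) :
    ∃ h : M → ℝ, LipschitzWith 1 h ∧
      (h x - h y) / dist x y - (h u - h v) / dist u v =
        2 - max 0 (dist x y + dist u v - dist x u - dist y v) / dist x y := by
  set s := max 0 (dist x y + dist u v - dist x u - dist y v)
  have hs0 : 0 ≤ s := le_max_left _ _
  have hsE : dist x y + dist u v - dist x u - dist y v ≤ s := le_max_right _ _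
  have := dist_triangle u v y
  have := dist_triangle u x v
  have := dist_triangle x y v
  have := dist_triangle y u v
  have := dist_triangle x y u
  have := dist_triangle y x v
  have := dist_triangle u y v
  have := dist_triangle x v u
  have := dist_comm x u
  have := dist_comm y u
  have := dist_comm y v
  have := dist_comm x v
  have := dist_comm x y
  have := dist_comm u v
  have hs1 : s ≤ dist y u + dist x y - dist x u := max_le (by linarith) (by linarith)
  have hs2 : s ≤ 2 * dist x y := max_le (by linarith) (by linarith)
  -- `h(x) = d(x,u)` is the largest value allowed by `h(u) = 0`; then `h(y)` is the smallest
  -- value that the four-point Lipschitz constraints allow.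
  obtain ⟨h, hh, hval⟩ := exists_lipschitzWith_one_interpolating ![x, y, u, v]
    ![dist x u, dist x u - dist x y + s, 0, dist u v] (by
      intro i j
      fin_cases i <;> fin_cases j <;>
        simp only [Fin.zero_eta, Fin.mk_one, Fin.reduceFinMk, Matrix.cons_val, Matrix.cons_val_zero,
          Matrix.cons_val_one, dist_self] <;> linarith [dist_nonneg (x := x) (y := u)])
  refine ⟨h, hh, ?_⟩
  rw [show h x = dist x u from hval 0, show h y = dist x u - dist x y + s from hval 1,
    show h u = 0 from hval 2, show h v = dist u v from hval 3]
  have hdxy : dist x y ≠ 0 := dist_ne_zero.2 hxy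
  have hduv : dist u v ≠ 0 := dist_ne_zero.2 huv
  field_simp
  ring

theorem slope_sub_slope_le {h : M → ℝ} (hh : LipschitzWith 1 h) {x y p q : M} (hxy : x ≠ y)
    (hpq : p ≠ q) :
    (h x - h y) / dist x y - (h p - h q) / dist p q ≤
      2 - (dist x y + dist p q - dist x p - dist y q) / max (dist x y) (dist p q) := by
  have lip : ∀ a b, h a - h b ≤ dist a b := fun a b => by
    have := hh.le_add_mul a b
    push_cast at this
    linarith
  have hdxy := dist_pos.2 hxy
  have hdpq := dist_pos.2 hpq
  set s := (h x - h y) / dist x y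
  set t := (h p - h q) / dist p q
  have hs : s * dist x y = h x - h y := div_mul_cancel₀ _ hdxy.ne'
  have ht : t * dist p q = h p - h q := div_mul_cancel₀ _ hdpq.ne'
  have hs1 : s ≤ 1 := (div_le_one hdxy).2 (lip x y)
  have ht1 : -1 ≤ t := (le_div_iff₀ hdpq).2 (by linarith [lip q p, dist_comm p q])
  set m := max (dist x y) (dist p q)
  have hm : 0 < m := lt_max_of_lt_left hdxy
  have key : dist x y + dist p q - dist x p - dist y q ≤ (2 - (s - t)) * m :=
    calc dist x y + dist p q - dist x p - dist y q
        ≤ (1 - s) * dist x y + (1 + t) * dist p q := by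
          linarith [lip x p, lip q y, dist_comm q y]
      _ ≤ (1 - s) * m + (1 + t) * m :=
          add_le_add (mul_le_mul_of_nonneg_left (le_max_left _ _) (by linarith))
            (mul_le_mul_of_nonneg_left (le_max_right _ _) (by linarith))
      _ = (2 - (s - t)) * m := by ring
  linarith [(div_le_iff₀ hm).2 key]

theorem exists_lipschitz_steep_only_on [CompactSpace M] {u v : M} (huv : u ≠ v)
    (hext : ∀ z, dist u z + dist z v = dist u v → z = u ∨ z = v) {P : M → M → Prop}
    {r : ℝ} (hr : 0 < r) (hP : ∀ p q, dist p u < r → dist q v < r → P p q) :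
    ∃ f : M → ℝ, (∀ p q, f p - f q ≤ dist p q) ∧ dist u v / 2 < f u - f v ∧
      ∀ p q, dist p q / 2 < f p - f q → P p q := by
  classical
  have hduv := dist_pos.2 huv
  set ρ := min r (dist u v / 4)
  have hρ : 0 < ρ := lt_min hr (by linarith)
  obtain ⟨ξ, hξ, hcluster⟩ := exists_pos_forall_near_endpoints hext hρ
  set w : M → M → ℝ := fun p q => if P p q then dist p q else dist p q / 2
  have hw : ∀ p q, dist p q / 2 ≤ w p q := fun p q => by
    simp only [w]
    split_ifs <;> linarith [dist_nonneg (x := p) (y := q)]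
  have hwd : ∀ p q, w p q ≤ dist p q := fun p q => by
    simp only [w]
    split_ifs <;> linarith [dist_nonneg (x := p) (y := q)]
  have hjump : ∀ p q, dist p u < ρ → dist q v < ρ → dist p q ≤ w p q := fun p q hp hq => by
    simp only [w, if_pos (hP p q (hp.trans_le (min_le_left _ _)) (hq.trans_le (min_le_left _ _)))]
    rfl
  have hbdd := bddBelow_range_chainCost hw v
  refine ⟨chainDist w v, fun p q => ?_, ?_, fun p q hpq => ?_⟩
  · linarith [chainDist_le_add hbdd p q, hwd p q]
  · have hv : chainDist w v v ≤ 0 := by simpa [w] using chainDist_le hbdd v []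
    have hu : min (dist u v - ρ) ((dist u v + ξ) / 2) ≤ chainDist w v u := by
      refine le_ciInf fun l => ?_
      rcases lt_or_ge (dist u u + chainCost dist v u l) (dist u v + ξ) with hshort | hlong
      · have := chainCost_ge_of_cluster hw hjump hcluster l u (by simpa using hρ) hshort
        exact (min_le_left _ _).trans (by linarith [dist_le_chainCost_dist v u l])
      · have := half_chainCost_dist_le hw v u l
        rw [dist_self] at hlong
        exact (min_le_right _ _).trans (by linarith)
    have : dist u v / 2 < min (dist u v - ρ) ((dist u v + ξ) / 2) :=
      lt_min (by linarith [min_le_right r (dist u v / 4)]) (by linarith)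
    linarith
  · by_contra hnP
    have := chainDist_le_add hbdd p q
    simp only [w, if_neg hnP] at this
    linarith

theorem exists_steep_pair_short_or_extreme [CompactSpace M] {f : M → ℝ} (hf : Continuous f)
    {β δ : ℝ} (hδ : 0 < δ) (hsteep : ∃ p q, β * dist p q < f p - f q) :
    ∃ u v, u ≠ v ∧ β * dist u v ≤ f u - f v ∧
      (dist u v ≤ δ ∨ ∀ z, dist u z + dist z v = dist u v → z = u ∨ z = v) := by
  by_cases hshort : ∃ u v, u ≠ v ∧ β * dist u v ≤ f u - f v ∧ dist u v ≤ δ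
  · obtain ⟨u, v, huv, hβ, hδ⟩ := hshort
    exact ⟨u, v, huv, hβ, Or.inl hδ⟩
  push Not at hshort
  set C := {pq : M × M | δ ≤ dist pq.1 pq.2 ∧ β * dist pq.1 pq.2 ≤ f pq.1 - f pq.2}
  have hdist : Continuous fun pq : M × M => dist pq.1 pq.2 := continuous_fst.dist continuous_snd
  have hC : IsClosed C :=
    (isClosed_le continuous_const hdist).inter (isClosed_le (continuous_const.mul hdist)
      ((hf.comp continuous_fst).sub (hf.comp continuous_snd)))
  obtain ⟨p, q, hpq⟩ := hsteep
  have hpq' : p ≠ q := by rintro rfl; simp at hpq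
  obtain ⟨⟨u, v⟩, ⟨hδuv, hβuv⟩, hmin⟩ :=
    hC.isCompact.exists_isMinOn ⟨(p, q), (hshort p q hpq' hpq.le).le, hpq.le⟩ hdist.continuousOn
  have hle : ∀ a b, a ≠ b → β * dist a b ≤ f a - f b → dist u v ≤ dist a b :=
    fun a b hab h => hmin (show (a, b) ∈ C from ⟨(hshort a b hab h).le, h⟩)
  refine ⟨u, v, dist_pos.1 (hδ.trans_le hδuv), hβuv, Or.inr fun z hz => ?_⟩
  by_contra! hzuv
  have huz := dist_pos.2 (Ne.symm hzuv.1)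
  have hzv := dist_pos.2 hzuv.2
  rcases le_or_gt (β * dist u z) (f u - f z) with h | h
  · linarith [hle u z (Ne.symm hzuv.1) h]
  · have hsplit : β * dist u v = β * dist u z + β * dist z v := by rw [← hz, mul_add]
    linarith [hle z v hzuv.2 (by linarith)]

def IsDaugavetMolecule (x y : M) : Prop :=
  ∀ f : M → ℝ, LipschitzWith 1 f → (∀ K : ℝ≥0, LipschitzWith K f → 1 ≤ K) →
    ∀ α : ℝ, 0 < α → α < 1 → ∀ ε : ℝ, 0 < ε →
      ∃ u v : M, u ≠ v ∧ f u - f v > (1 - α) * dist u v ∧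
        ∃ h : M → ℝ, LipschitzWith 1 h ∧
          (h x - h y) / dist x y - (h u - h v) / dist u v > 2 - ε

theorem isDaugavetMolecule_of_forall_extreme [CompactSpace M] {x y : M} (hxy : x ≠ y)
    (H : ∀ u v : M, u ≠ v → (∀ z, dist u z + dist z v = dist u v → z = u ∨ z = v) →
      dist x y + dist u v ≤ dist x u + dist y v) :
    IsDaugavetMolecule x y := by
  intro f hf hfmin α hα hα1 ε hε
  have hdxy := dist_pos.2 hxy
  obtain ⟨u, v, huv, hsteep, hshort⟩ := exists_steep_pair_short_or_extreme hf.continuous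
    (δ := ε * dist x y / 4) (by positivity)
    (exists_mul_dist_lt_sub_of_forall_one_le hfmin (β := 1 - α / 2) (by linarith))
  obtain ⟨h, hh, hgap⟩ := exists_lipschitzWith_one_slope_sub_slope_eq hxy huv
  have hduv := dist_pos.2 huv
  refine ⟨u, v, huv, by nlinarith, h, hh, ?_⟩
  suffices max 0 (dist x y + dist u v - dist x u - dist y v) < ε * dist x y by
    rw [hgap]
    linarith [(div_lt_iff₀ hdxy).2 this]
  refine max_lt (by positivity) ?_
  rcases hshort with hshort | hext
  · linarith [dist_triangle x u y, dist_triangle u v y, dist_comm u y, dist_comm v y]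
  · linarith [H u v huv hext, mul_pos hε hdxy]

theorem dist_add_dist_le_of_isDaugavetMolecule [CompactSpace M] {x y : M}
    (H : IsDaugavetMolecule x y) (hxy : x ≠ y) {u v : M} (huv : u ≠ v)
    (hext : ∀ z, dist u z + dist z v = dist u v → z = u ∨ z = v) :
    dist x y + dist u v ≤ dist x u + dist y v := by
  by_contra! hlt
  set e := dist x y + dist u v - dist x u - dist y v
  have he : 0 < e := by linarith
  obtain ⟨f, hf1, hfuv, hfsteep⟩ := exists_lipschitz_steep_only_on huv hext
    (P := fun p q => e / 2 < dist x y + dist p q - dist x p - dist y q) (r := e / 8)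
    (by positivity) fun p q hp hq => by
      linarith [dist_triangle x u p, dist_triangle y v q, dist_triangle u p v, dist_triangle p q v,
        dist_comm u p, dist_comm q v]
  have hduv := dist_pos.2 huv
  obtain ⟨L, hL, hg1, hgmin⟩ := (LipschitzWith.of_le_add (f := f) fun p q => by
    linarith [hf1 p q]).exists_pos_isLeast_div (a := u) (b := v) (by linarith)
  have hL2 : 1 / 2 < L := by
    have := hg1.le_add_mul u v
    rw [div_add' _ _ _ hL.ne', div_le_div_iff_of_pos_right hL] at this
    push_cast at this
    nlinarith
  set Δ := Metric.diam (Set.univ : Set M)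
  have hdiam : ∀ p q : M, dist p q ≤ Δ := fun p q =>
    Metric.dist_le_diam_of_mem isCompact_univ.isBounded trivial trivial
  have hΔ : 0 < Δ := hduv.trans_le (hdiam u v)
  obtain ⟨p, q, hpq, hsteep, h, hh, hgap⟩ :=
    H _ hg1 hgmin (1 - 1 / (2 * L)) (by rw [sub_pos, div_lt_one (by linarith)]; linarith)
      (by linarith [show 0 < 1 / (2 * L) by positivity]) (e / 2 / Δ) (by positivity)
  have hE : e / 2 < dist x y + dist p q - dist x p - dist y q := by
    refine hfsteep p q ?_
    have e1 : (1 - (1 - 1 / (2 * L))) * dist p q = dist p q / 2 / L := by ring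
    have e2 : f p / L - f q / L = (f p - f q) / L := by ring
    rw [← div_lt_div_iff_of_pos_right hL]
    linarith
  have : e / 2 / Δ ≤ (dist x y + dist p q - dist x p - dist y q) / max (dist x y) (dist p q) :=
    div_le_div₀ (by linarith) hE.le (lt_max_of_lt_left (dist_pos.2 hxy))
      (max_le (hdiam _ _) (hdiam _ _))
  linarith [slope_sub_slope_le hh hxy hpq]

end MetricSpace

/-- For a compact metric space `M` and distinct `x, y ∈ M`, the molecule `m_{x,y}` is a
Daugavet point iff a purely metric separation condition from "extreme" pairs holds. -/
theorem molecule_daugavet_point_iff {M : Type*} [MetricSpace M] [CompactSpace M]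
    (x y : M) (hxy : x ≠ y) :
    (∀ f : M → ℝ, LipschitzWith 1 f → (∀ K : ℝ≥0, LipschitzWith K f → 1 ≤ K) →
      ∀ α : ℝ, 0 < α → α < 1 → ∀ ε : ℝ, 0 < ε →
        ∃ u v : M, u ≠ v ∧ f u - f v > (1 - α) * dist u v ∧
          ∃ h : M → ℝ, LipschitzWith 1 h ∧
            (h x - h y) / dist x y - (h u - h v) / dist u v > 2 - ε)
    ↔
    (∀ u v : M, u ≠ v → (∀ z : M, dist u z + dist z v = dist u v → z = u ∨ z = v) →
      dist x y + dist u v ≤ min (dist x u + dist y v) (dist x v + dist y u)) := by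
  refine ⟨fun H u v huv hext => le_min ?_ ?_, fun H => ?_⟩
  · exact dist_add_dist_le_of_isDaugavetMolecule H hxy huv hext
  · have hext' : ∀ z, dist v z + dist z u = dist v u → z = v ∨ z = u := fun z hz =>
      (hext z (by rw [dist_comm u z, dist_comm z v, dist_comm u v]; linarith)).symm
    have := dist_add_dist_le_of_isDaugavetMolecule H hxy huv.symm hext'
    rwa [dist_comm v u] at this
  · exact isDaugavetMolecule_of_forall_extreme hxy fun u v huv hext =>
      (H u v huv hext).trans (min_le_left _ _)
end

section
/- Let (M, e) be a complete pointed metric space and let f : M → ℝ satisfy f(e) = 0, have Lipschitz constant exactly 1, and be local, i.e. for every δ > 0 there exist u ≠ v ∈ M with d(u, v) < δ and f(u) − f(v) > (1 − δ)·d(u, v). Let x₁, …, x_N ∈ M and β₁, …, β_N ∈ ℝ be such that sup{ Σ_{i=1}^N βᵢ·h(xᵢ) : h : M → ℝ is 1-Lipschitz and h(e) = 0 } = 1. Then for every α ∈ (0, 1), every 1-Lipschitz g : M → ℝ with g(e) = 0 and Σ βᵢ·g(xᵢ) > 1 − α, and every ε > 0, there exists a 1-Lipschitz function h : M → ℝ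 with h(e) = 0 and Σ βᵢ·h(xᵢ) > 1 − α, together with points p ≠ q ∈ M such that (f(p) − h(p)) − (f(q) − h(q)) > (2 − ε)·d(p, q). (This expresses that every local norm-one f ∈ Lip₀(M) is a w*-Daugavet point of the unit ball of Lip₀(M).) -/
/-!
Locality of `f` gives points `u ≠ v`, as close as we like, at which `f` has slope almost `1`.
Lowering `g` near `u` to `min g (g v - d(u, v) + d(·, u))` and renormalising at `e` moves `g`
uniformly by at most `2 d(u, v)`, so the new function `h` stays in the slice, while `h` has
slope `-1` from `u` to `v`. Hence `f - h` has slope almost `2` between `u` and `v`.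
-/

section Dip

variable {M : Type*} [PseudoMetricSpace M] {g : M → ℝ}

noncomputable def dipAt (g : M → ℝ) (u v : M) (t : M) : ℝ :=
  min (g t) (g v - dist u v + dist t u)

theorem dipAt_le (g : M → ℝ) (u v t : M) : dipAt g u v t ≤ g t :=
  min_le_left _ _

theorem dipAt_right (g : M → ℝ) (u v : M) : dipAt g u v v = g v := by
  simp [dipAt, dist_comm v u]

theorem LipschitzWith.dipAt_left (hg : LipschitzWith 1 g) (u v : M) :
    dipAt g u v u = g v - dist u v := by
  have : g v ≤ g u + dist v u := by simpa using hg.le_add_mul v u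
  simp only [dipAt, dist_self, add_zero]
  exact min_eq_right (by linarith [dist_comm u v])

theorem LipschitzWith.sub_two_mul_dist_le_dipAt (hg : LipschitzWith 1 g) (u v t : M) :
    g t - 2 * dist u v ≤ dipAt g u v t := by
  have : g t ≤ g v + dist t v := by simpa using hg.le_add_mul t v
  exact le_min (by linarith [dist_nonneg (x := u) (y := v)])
    (by linarith [dist_triangle t u v])

theorem LipschitzWith.lipschitzWith_dipAt (hg : LipschitzWith 1 g) (u v : M) :
    LipschitzWith 1 (dipAt g u v) := by
  unfold dipAt
  simpa using hg.min ((LipschitzWith.const (g v - dist u v)).add (LipschitzWith.dist_left u))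

theorem LipschitzWith.exists_near_slope_neg_one (hg : LipschitzWith 1 g) {e : M} (hge : g e = 0)
    (u v : M) :
    ∃ h : M → ℝ, LipschitzWith 1 h ∧ h e = 0 ∧ h v - h u = dist u v ∧
      ∀ t, |h t - g t| ≤ 2 * dist u v := by
  set φ := dipAt g u v
  have hφ_le (t : M) := dipAt_le g u v t
  have hφ_ge (t : M) := hg.sub_two_mul_dist_le_dipAt u v t
  refine ⟨fun t => φ t - φ e, ?_, sub_self _, ?_, fun t => abs_le.2 ⟨?_, ?_⟩⟩
  · simpa using (hg.lipschitzWith_dipAt u v).sub (LipschitzWith.const (φ e))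
  · simp only [φ, dipAt_right, hg.dipAt_left]
    ring
  · linarith [hφ_ge t, hφ_le e]
  · linarith [hφ_le t, hφ_ge e]

end Dip

theorem abs_sum_mul_sub_sum_mul_le {ι : Type*} (s : Finset ι) (β a b : ι → ℝ) {r : ℝ}
    (hab : ∀ i ∈ s, |a i - b i| ≤ r) :
    |∑ i ∈ s, β i * a i - ∑ i ∈ s, β i * b i| ≤ (∑ i ∈ s, |β i|) * r := by
  rw [← Finset.sum_sub_distrib, Finset.sum_mul]
  refine (Finset.abs_sum_le_sum_abs _ _).trans (Finset.sum_le_sum fun i hi => ?_)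
  rw [← mul_sub, abs_mul]
  exact mul_le_mul_of_nonneg_left (hab i hi) (abs_nonneg _)

open NNReal

theorem local_lipschitz_function_wstar_daugavet_point_general {M : Type*} [MetricSpace M]
    (e : M) (f : M → ℝ)
    (hlocal : ∀ δ : ℝ, 0 < δ → ∃ u v : M, u ≠ v ∧ dist u v < δ ∧
      f u - f v > (1 - δ) * dist u v)
    (N : ℕ) (x : Fin N → M) (β : Fin N → ℝ) :
    ∀ α : ℝ, 0 < α → α < 1 → ∀ g : M → ℝ, LipschitzWith 1 g → g e = 0 →
      (∑ i, β i * g (x i)) > 1 - α → ∀ ε : ℝ, 0 < ε →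
      ∃ h : M → ℝ, LipschitzWith 1 h ∧ h e = 0 ∧ (∑ i, β i * h (x i)) > 1 - α ∧
        ∃ p q : M, p ≠ q ∧ (f p - h p) - (f q - h q) > (2 - ε) * dist p q := by
  intro α _ _ g hg hge hgβ ε hε
  set B := ∑ i, |β i|
  set c := ∑ i, β i * g (x i) - (1 - α)
  have hB : 0 ≤ B := Finset.sum_nonneg fun i _ => abs_nonneg _
  have hc : 0 < c := sub_pos.2 hgβ
  set δ := min ε (c / (2 * B + 1))
  obtain ⟨u, v, huv, huvδ, hfuv⟩ := hlocal δ (lt_min hε (by positivity))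
  obtain ⟨h, hh, hhe, hhuv, hhg⟩ := hg.exists_near_slope_neg_one hge u v
  refine ⟨h, hh, hhe, ?_, u, v, huv, ?_⟩
  · have hδ : δ * (2 * B + 1) ≤ c := (le_div_iff₀ (by positivity)).1 (min_le_right _ _)
    have hsmall : B * (2 * dist u v) < c := by nlinarith [dist_nonneg (x := u) (y := v)]
    have hβ := (abs_le.1 (abs_sum_mul_sub_sum_mul_le Finset.univ β (fun i => h (x i))
      (fun i => g (x i)) fun i _ => hhg (x i))).1
    linarith
  · have hδε : (2 - ε) * dist u v ≤ (2 - δ) * dist u v :=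
      mul_le_mul_of_nonneg_right (by linarith [min_le_left ε (c / (2 * B + 1))]) dist_nonneg
    calc (f u - h u) - (f v - h v) = (f u - f v) + (h v - h u) := by ring
      _ > (1 - δ) * dist u v + dist u v := by rw [hhuv]; linarith
      _ = (2 - δ) * dist u v := by ring
      _ ≥ (2 - ε) * dist u v := hδε

/-- Every local norm-one `f ∈ Lip₀(M)` over a complete pointed metric space is a
`w*`-Daugavet point of the unit ball of `Lip₀(M)`. -/
theorem local_lipschitz_function_wstar_daugavet_point {M : Type*} [MetricSpace M]
    [CompleteSpace M] (e : M) (f : M → ℝ) (hfe : f e = 0) (hf1 : LipschitzWith 1 f)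
    (hfexact : ∀ K : ℝ≥0, LipschitzWith K f → 1 ≤ K)
    (hlocal : ∀ δ : ℝ, 0 < δ → ∃ u v : M, u ≠ v ∧ dist u v < δ ∧
      f u - f v > (1 - δ) * dist u v)
    (N : ℕ) (x : Fin N → M) (β : Fin N → ℝ)
    (hnorm : IsLUB {s : ℝ | ∃ h : M → ℝ, LipschitzWith 1 h ∧ h e = 0 ∧
      s = ∑ i, β i * h (x i)} 1) :
    ∀ α : ℝ, 0 < α → α < 1 → ∀ g : M → ℝ, LipschitzWith 1 g → g e = 0 →
      (∑ i, β i * g (x i)) > 1 - α → ∀ ε : ℝ, 0 < ε →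
      ∃ h : M → ℝ, LipschitzWith 1 h ∧ h e = 0 ∧ (∑ i, β i * h (x i)) > 1 - α ∧
        ∃ p q : M, p ≠ q ∧ (f p - h p) - (f q - h q) > (2 - ε) * dist p q :=
  local_lipschitz_function_wstar_daugavet_point_general e f hlocal N x β
end

section
/- Let M be a metric space and let x, y ∈ M be distinct connectable points. Then the pair (x, y) satisfies the local Δ-condition. (In the Lipschitz-free space over M this implies that the molecule m_{x,y} is a Δ-point.) -/
/-!
Follow a path `γ` from `y` to `x` whose length `L` is so close to `d(x, y)` that still
`θ * L < f x - f y`. Cut `[0, L]` into pieces shorter than `ε`: the increments of `f ∘ γ` over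
the pieces telescope to `f x - f y`, so over one of them `f ∘ γ` has slope greater than `θ`,
and as `γ` is `1`-Lipschitz the endpoints of that piece are at distance at most its length.
-/

/-- The pair `(x, y)` satisfies the local Δ-condition: for every `1`-Lipschitz
`f : M → ℝ`, every `θ ∈ (0,1)` with `f x - f y > θ * d(x,y)`, and every `ε > 0`,
there are points `u, v` with `0 < d(u,v) < ε` and `f u - f v > θ * d(u,v)`. -/
def LocalDeltaCondition {M : Type*} [MetricSpace M] (x y : M) : Prop :=
  ∀ f : M → ℝ, LipschitzWith 1 f → ∀ θ : ℝ, 0 < θ → θ < 1 →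
    f x - f y > θ * dist x y → ∀ ε : ℝ, 0 < ε →
      ∃ u v : M, 0 < dist u v ∧ dist u v < ε ∧ f u - f v > θ * dist u v

theorem exists_lt_sub_of_mul_lt_sub {g : ℕ → ℝ} {c : ℝ} :
    ∀ {n : ℕ}, n * c < g n - g 0 → ∃ i < n, c < g (i + 1) - g i
  | 0, h => by simp at h
  | n + 1, h => by
    by_cases hstep : c < g (n + 1) - g n
    · exact ⟨n, n.lt_succ_self, hstep⟩
    · obtain ⟨i, hi, hci⟩ := exists_lt_sub_of_mul_lt_sub (g := g) (c := c) (n := n)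
        (by push_cast at h; linarith [not_lt.mp hstep])
      exact ⟨i, hi.trans n.lt_succ_self, hci⟩

theorem exists_short_chord_slope_gt {φ : ℝ → ℝ} {a b θ ε : ℝ} (hab : a < b) (hε : 0 < ε)
    (hslope : θ * (b - a) < φ b - φ a) :
    ∃ s t, a ≤ s ∧ t ≤ b ∧ 0 < t - s ∧ t - s < ε ∧ θ * (t - s) < φ t - φ s := by
  obtain ⟨n, hn⟩ := exists_nat_gt ((b - a) / ε)
  have hn_pos : (0 : ℝ) < n := (div_pos (sub_pos.mpr hab) hε).trans hn
  set h := (b - a) / n with h_def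
  have hh_pos : 0 < h := div_pos (sub_pos.mpr hab) hn_pos
  have hnh : n * h = b - a := by rw [h_def]; field_simp
  have hhε : h < ε := by
    rw [h_def, div_lt_iff₀ hn_pos]
    rwa [div_lt_iff₀ hε, mul_comm] at hn
  obtain ⟨i, hi, hstep⟩ := exists_lt_sub_of_mul_lt_sub (g := fun i : ℕ ↦ φ (a + i * h))
    (c := θ * h) (n := n) (by simpa [mul_left_comm _ θ, hnh] using hslope)
  have hi' : ((i : ℝ) + 1) ≤ n := by exact_mod_cast hi
  refine ⟨a + i * h, a + (i + 1) * h, le_add_of_nonneg_right (by positivity), ?_, ?_, ?_, ?_⟩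
  · nlinarith
  · linarith
  · linarith
  · simpa [add_sub_add_left_eq_sub, ← sub_mul] using hstep

theorem exists_close_pair_slope_gt_of_lipschitzOnWith {M : Type*} [MetricSpace M]
    {γ : ℝ → M} {f : M → ℝ} {a b θ ε : ℝ} (hγ : LipschitzOnWith 1 γ (Set.Icc a b))
    (hab : a < b) (hθ : 0 ≤ θ) (hε : 0 < ε) (hslope : θ * (b - a) < f (γ b) - f (γ a)) :
    ∃ u v : M, 0 < dist u v ∧ dist u v < ε ∧ θ * dist u v < f u - f v := by
  obtain ⟨s, t, has, htb, hst, hstε, hchord⟩ :=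
    exists_short_chord_slope_gt (φ := f ∘ γ) hab hε hslope
  have hdist : dist (γ t) (γ s) ≤ t - s := by
    simpa [Real.dist_eq, abs_of_pos hst] using
      hγ.dist_le_mul t ⟨by linarith, htb⟩ s ⟨has, by linarith⟩
  have hθdist : θ * dist (γ t) (γ s) < f (γ t) - f (γ s) :=
    (mul_le_mul_of_nonneg_left hdist hθ).trans_lt hchord
  refine ⟨γ t, γ s, dist_pos.mpr fun heq ↦ ?_, hdist.trans_lt hstε, hθdist⟩
  simp [heq] at hθdist

theorem connectable_implies_localDelta_general {M : Type*} [MetricSpace M] (x y : M)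
    (hconn : ∀ ε : ℝ, 0 < ε → ∃ γ : ℝ → M,
      LipschitzOnWith 1 γ (Set.Icc 0 (dist x y + ε)) ∧
      γ 0 = y ∧ γ (dist x y + ε) = x) :
    LocalDeltaCondition x y := by
  intro f _ θ hθ _ hfxy ε hε
  obtain ⟨δ, hδ, hθδ⟩ := exists_pos_mul_lt (sub_pos.mpr hfxy) θ
  obtain ⟨γ, hγ, hγ0, hγL⟩ := hconn δ hδ
  have hslope : θ * (dist x y + δ - 0) < f (γ (dist x y + δ)) - f (γ 0) := by
    rw [hγ0, hγL]; linarith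
  exact exists_close_pair_slope_gt_of_lipschitzOnWith hγ (by positivity) hθ.le hε hslope

/-- If `x` and `y` are connectable then the pair `(x, y)` satisfies the local
Δ-condition (i.e. the molecule `m_{x,y}` is a Δ-point). -/
theorem connectable_implies_localDelta {M : Type*} [MetricSpace M] (x y : M)
    (hxy : x ≠ y)
    (hconn : ∀ ε : ℝ, 0 < ε → ∃ γ : ℝ → M,
      LipschitzOnWith 1 γ (Set.Icc 0 (dist x y + ε)) ∧
      γ 0 = y ∧ γ (dist x y + ε) = x) :
    LocalDeltaCondition x y :=
  connectable_implies_localDelta_general x y hconn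
end

section
/- Let M be a complete metric space and let x ≠ y ∈ M be such that the pair (x, y) satisfies the local Δ-condition. Then for every r with 0 < r < d(x, y) and every ε > 0, the closed balls B(x, r + ε) and B(y, d(x, y) − r + ε) in M have nonempty intersection. If moreover M is compact, then for every r with 0 < r < d(x, y) there exists z ∈ M with d(z, x) = r and d(z, y) = d(x, y) − r. -/
/-!
Suppose the closed balls `B(x, r)` and `B(y, s)` are disjoint although `r + s > d(x, y)`, and let
`δ = (r + s - d(x, y)) / 4`. The cones `g = (r - δ - d(·, x))⁺` and `k = (s - δ - d(·, y))⁺` are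
`1`-Lipschitz, and their supports are `δ`-apart, since a point within `δ` of the support of `g`
lies in `B(x, r)`. Hence `f = (g - k) / 2` is `1`-Lipschitz with `f x - f y > d(x, y) / 2`, yet
`f u - f v ≤ d(u, v) / 2` whenever `d(u, v) < δ`, contradicting the local Δ-condition.
In a compact space, minimising `max (d(·, x) - r) (d(·, y) - s)` turns the resulting enlarged-ball
intersections into an intersection of the balls themselves.
-/

open Metric

section

variable {M : Type*} [MetricSpace M]

lemma lipschitzWith_one_max_sub_dist (c : M) (ρ : ℝ) :
    LipschitzWith 1 fun t => max (ρ - dist t c) 0 :=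
  LipschitzWith.max_const (LipschitzWith.of_le_add fun u v => by
    linarith [dist_triangle v u c, dist_comm u v]) 0

lemma half_sub_le_of_supports_separated {g k : M → ℝ} (hg : LipschitzWith 1 g)
    (hk : LipschitzWith 1 k) {δ : ℝ} (hsep : ∀ u v, dist u v < δ → g u ≠ 0 → k v = 0)
    {u v : M} (huv : dist u v < δ) :
    (g u - k u) / 2 - (g v - k v) / 2 ≤ 1 / 2 * dist u v := by
  have hδ : ∀ w : M, dist w w < δ := fun w => by
    rw [dist_self]; exact dist_nonneg.trans_lt huv
  have hgu := hg.le_add_mul u v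
  have hkv := hk.le_add_mul v u
  rw [dist_comm v u] at hkv
  push_cast at hgu hkv
  by_cases hgu0 : g u = 0
  · by_cases hgv0 : g v = 0
    · linarith
    · have := hsep v v (hδ v) hgv0
      have := hsep v u (by rwa [dist_comm]) hgv0
      linarith
  · have := hsep u u (hδ u) hgu0
    have := hsep u v huv hgu0
    linarith

namespace LocalDeltaCondition

variable {x y : M}

theorem closedBall_inter_nonempty (h : LocalDeltaCondition x y) {r s : ℝ} (hr : 0 ≤ r)
    (hs : 0 ≤ s) (hrs : dist x y < r + s) : (closedBall x r ∩ closedBall y s).Nonempty := by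
  by_contra hdisj
  have hmem : ∀ z, dist z x ≤ r → dist z y ≤ s → False := fun z hzx hzy =>
    hdisj ⟨z, mem_closedBall.2 hzx, mem_closedBall.2 hzy⟩
  have hr_lt : r < dist x y := by
    by_contra! hle; exact hmem y (by rwa [dist_comm]) (by rwa [dist_self])
  have hs_lt : s < dist x y := by
    by_contra! hle; exact hmem x (by rwa [dist_self]) hle
  set δ := (r + s - dist x y) / 4 with hδ
  set g : M → ℝ := fun t => max (r - δ - dist t x) 0
  set k : M → ℝ := fun t => max (s - δ - dist t y) 0
  have hg := lipschitzWith_one_max_sub_dist x (r - δ)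
  have hk := lipschitzWith_one_max_sub_dist y (s - δ)
  set f : M → ℝ := fun t => (g t - k t) / 2
  have hf : LipschitzWith 1 f := LipschitzWith.of_le_add fun u v => by
    have := hg.le_add_mul u v
    have := hk.le_add_mul v u
    push_cast at *
    simp only [f]
    linarith [dist_comm u v]
  have hsep : ∀ u v, dist u v < δ → g u ≠ 0 → k v = 0 := fun u v huv hgu => by
    have hux : dist u x < r - δ := by
      by_contra! hle
      exact hgu (max_eq_right (by linarith))
    have hvy : s < dist v y := by
      by_contra! hle
      exact hmem v (by linarith [dist_triangle v u x, dist_comm u v]) hle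
    exact max_eq_right (by linarith)
  have hfxy : f x - f y > 1 / 2 * dist x y := by
    have hgx : r - δ ≤ g x := by simp [g]
    have hky : s - δ ≤ k y := by simp [k]
    have hkx : k x = 0 := max_eq_right (by linarith)
    have hgy : g y = 0 := max_eq_right (by rw [dist_comm]; linarith)
    simp only [f, hkx, hgy]
    linarith
  obtain ⟨u, v, -, huv, hslope⟩ := h f hf (1 / 2) one_half_pos one_half_lt_one hfxy δ (by
    rw [hδ]; linarith)
  exact (half_sub_le_of_supports_separated hg hk hsep huv).not_gt hslope

theorem closedBall_inter_nonempty_of_compactSpace [CompactSpace M] (h : LocalDeltaCondition x y)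
    {r s : ℝ} (hr : 0 ≤ r) (hs : 0 ≤ s) (hrs : dist x y ≤ r + s) :
    (closedBall x r ∩ closedBall y s).Nonempty := by
  set φ : M → ℝ := fun z => max (dist z x - r) (dist z y - s)
  have hφ : Continuous φ := by fun_prop
  obtain ⟨z, -, hz⟩ := isCompact_univ.exists_isMinOn ⟨x, Set.mem_univ x⟩ hφ.continuousOn
  have hφz : φ z ≤ 0 := by
    by_contra! hpos
    obtain ⟨w, hwx, hwy⟩ := h.closedBall_inter_nonempty (r := r + φ z / 2) (s := s + φ z / 2)
      (by linarith) (by linarith) (by linarith)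
    rw [mem_closedBall] at hwx hwy
    have : φ w ≤ φ z / 2 := max_le (by linarith) (by linarith)
    linarith [isMinOn_iff.1 hz w (Set.mem_univ w)]
  exact ⟨z, mem_closedBall.2 (by linarith [le_max_left (dist z x - r) (dist z y - s)]),
    mem_closedBall.2 (by linarith [le_max_right (dist z x - r) (dist z y - s)])⟩

end LocalDeltaCondition

end

theorem localDelta_balls_intersect_general {M : Type*} [MetricSpace M]
    (x y : M) (h : LocalDeltaCondition x y) :
    (∀ r : ℝ, 0 < r → r < dist x y → ∀ ε : ℝ, 0 < ε →
      (Metric.closedBall x (r + ε) ∩ Metric.closedBall y (dist x y - r + ε)).Nonempty) ∧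
    (CompactSpace M → ∀ r : ℝ, 0 < r → r < dist x y →
      ∃ z : M, dist z x = r ∧ dist z y = dist x y - r) := by
  refine ⟨fun r hr hrd ε hε => h.closedBall_inter_nonempty (by linarith) (by linarith)
    (by linarith), fun _ r hr hrd => ?_⟩
  obtain ⟨z, hzx, hzy⟩ :=
    h.closedBall_inter_nonempty_of_compactSpace hr.le (sub_nonneg.2 hrd.le) (by linarith)
  rw [mem_closedBall] at hzx hzy
  have := dist_triangle_left x y z
  exact ⟨z, by linarith, by linarith⟩

/-- If `m_{x,y}` is a Δ-point then enlarged balls around `x` and `y` with radii summing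
to `d(x,y) + 2ε` intersect; for compact `M`, the corresponding spheres intersect. -/
theorem localDelta_balls_intersect {M : Type*} [MetricSpace M] [CompleteSpace M]
    (x y : M) (hxy : x ≠ y) (h : LocalDeltaCondition x y) :
    (∀ r : ℝ, 0 < r → r < dist x y → ∀ ε : ℝ, 0 < ε →
      (Metric.closedBall x (r + ε) ∩ Metric.closedBall y (dist x y - r + ε)).Nonempty) ∧
    (CompactSpace M → ∀ r : ℝ, 0 < r → r < dist x y →
      ∃ z : M, dist z x = r ∧ dist z y = dist x y - r) :=
  localDelta_balls_intersect_general x y h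
end

section
/- Let M be a complete metric space. The following are equivalent: (i) for every pair of distinct points x, y ∈ M and every δ > 0, the closed balls B(x, (1 + δ)·d(x, y)/2) and B(y, (1 + δ)·d(x, y)/2) have nonempty intersection (i.e. M is a length space); (ii) every pair of distinct points of M satisfies the local Δ-condition. -/
/-!
If approximate midpoints exist, a pair of points on which `f` has slope above `θ (1 + η)^N`
can be halved `N` times, each time keeping the half on which the slope stays above
`θ (1 + η)^k`; this ends with a pair at distance about `2^{-N} d(x, y)` of slope above `θ`.

Conversely, if the closed balls of radius `r = (1 + δ) d(x, y) / 2` around `x` and `y` are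
disjoint, then every `ε`-chain from `x` to `y` has length more than `2 (r - ε)`, since the
point of the chain where half its length is used up would lie in both balls. The function
`z ↦ max 0 (ε - θ D_ε(x, z))`, with `D_ε` the infimum of the lengths of `ε`-chains, is then
`1`-Lipschitz with slope at most `θ` at scales below `ε`, while for suitable `ε` and `θ` its slope
on `(x, y)` exceeds `θ`.
-/

open Finset Metric Filter Topology

section Chains

variable {M : Type*} [PseudoMetricSpace M]

def IsEpsChain (ε : ℝ) (n : ℕ) (u : ℕ → M) (x z : M) : Prop :=
  u 0 = x ∧ u n = z ∧ ∀ i < n, dist (u i) (u (i + 1)) ≤ ε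

def chainLength (n : ℕ) (u : ℕ → M) : ℝ :=
  ∑ i ∈ range n, dist (u i) (u (i + 1))

lemma chainLength_nonneg (n : ℕ) (u : ℕ → M) : 0 ≤ chainLength n u :=
  sum_nonneg fun _ _ => dist_nonneg

lemma chainLength_update_succ (n : ℕ) (u : ℕ → M) (w : M) :
    chainLength (n + 1) (Function.update u (n + 1) w) = chainLength n u + dist (u n) w := by
  rw [chainLength, sum_range_succ, chainLength, Function.update_self,
    Function.update_of_ne (by omega)]
  congr 1
  refine sum_congr rfl fun i hi => ?_
  rw [mem_range] at hi
  rw [Function.update_of_ne (by omega), Function.update_of_ne (by omega)]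

variable {ε : ℝ} {n : ℕ} {u : ℕ → M} {x y z w : M}

lemma IsEpsChain.update_succ (hu : IsEpsChain ε n u x z) (hzw : dist z w ≤ ε) :
    IsEpsChain ε (n + 1) (Function.update u (n + 1) w) x w := by
  obtain ⟨hu0, hun, hstep⟩ := hu
  refine ⟨by rw [Function.update_of_ne (by omega), hu0], Function.update_self .., fun i hi => ?_⟩
  rcases Nat.lt_succ_iff_lt_or_eq.1 hi with hi | rfl
  · rw [Function.update_of_ne (by omega), Function.update_of_ne (by omega)]
    exact hstep i hi
  · rwa [Function.update_of_ne (by omega), Function.update_self, hun]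

lemma IsEpsChain.exists_near_midpoint (hε : 0 ≤ ε) (hu : IsEpsChain ε n u x y) :
    ∃ k, dist x (u k) ≤ chainLength n u / 2 ∧ dist (u k) y ≤ chainLength n u / 2 + ε := by
  obtain ⟨rfl, rfl, hstep⟩ := hu
  set L := chainLength n u
  set k := Nat.findGreatest (fun k => chainLength k u ≤ L / 2) n
  have hkn : k ≤ n := Nat.findGreatest_le n
  have h0 : chainLength 0 u ≤ L / 2 := by
    rw [chainLength, sum_range_zero]; linarith [chainLength_nonneg n u]
  have hk : chainLength k u ≤ L / 2 :=
    Nat.findGreatest_spec (P := fun k => chainLength k u ≤ L / 2) (Nat.zero_le n) h0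
  have hsplit : chainLength k u + ∑ i ∈ Ico k n, dist (u i) (u (i + 1)) = L :=
    sum_range_add_sum_Ico _ hkn
  have hk_large : L / 2 - ε ≤ chainLength k u := by
    rcases hkn.lt_or_eq with hkn | hkn
    · have hnext : ¬chainLength (k + 1) u ≤ L / 2 :=
        Nat.findGreatest_is_greatest (Nat.lt_succ_self k) hkn
      have : chainLength (k + 1) u = chainLength k u + dist (u k) (u (k + 1)) := sum_range_succ _ _
      linarith [hstep k hkn]
    · rw [hkn]
      linarith [chainLength_nonneg n u]
  refine ⟨k, (dist_le_range_sum_dist u k).trans hk, ?_⟩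
  linarith [dist_le_Ico_sum_dist u hkn]

lemma IsEpsChain.two_mul_sub_lt_chainLength {r : ℝ} (hε : 0 ≤ ε)
    (hxy : Disjoint (closedBall x r) (closedBall y r)) (hu : IsEpsChain ε n u x y) :
    2 * (r - ε) < chainLength n u := by
  by_contra! hL
  obtain ⟨k, hxk, hky⟩ := hu.exists_near_midpoint hε
  refine Set.disjoint_left.1 hxy (show u k ∈ closedBall x r from ?_)
    (show u k ∈ closedBall y r from ?_) <;> rw [mem_closedBall]
  · rw [dist_comm]; linarith
  · linarith

end Chains

section Potential

variable {M : Type*} [PseudoMetricSpace M] (ε θ : ℝ) (x : M)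

/-- `max 0 (ε - θ D)`, where `D` is the infimum of the lengths of the `ε`-chains from `x`
to `z` (`D = ∞` when there are none). -/
noncomputable def chainPotential (z : M) : ℝ :=
  sSup (insert 0 {t | ∃ n u, IsEpsChain ε n u x z ∧ t = ε - θ * chainLength n u})

variable {ε θ x} {z w : M}

lemma le_chainPotential (hε : 0 ≤ ε) (hθ : 0 ≤ θ) {t : ℝ}
    (ht : t = 0 ∨ ∃ n u, IsEpsChain ε n u x z ∧ t = ε - θ * chainLength n u) :
    t ≤ chainPotential ε θ x z :=
  le_csSup ⟨ε, by
    rintro _ (rfl | ⟨n, u, -, rfl⟩)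
    exacts [hε, by nlinarith [chainLength_nonneg n u]]⟩ ht

lemma chainPotential_le_of_forall {b : ℝ} (hb : 0 ≤ b)
    (h : ∀ n u, IsEpsChain ε n u x z → ε - θ * chainLength n u ≤ b) :
    chainPotential ε θ x z ≤ b :=
  csSup_le (Set.insert_nonempty _ _) (by rintro t (rfl | ⟨n, u, hu, rfl⟩); exacts [hb, h n u hu])

lemma chainPotential_nonneg (hε : 0 ≤ ε) (hθ : 0 ≤ θ) : 0 ≤ chainPotential ε θ x z :=
  le_chainPotential hε hθ (.inl rfl)

lemma chainPotential_le (hε : 0 ≤ ε) (hθ : 0 ≤ θ) : chainPotential ε θ x z ≤ ε :=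
  chainPotential_le_of_forall hε fun n u _ => by nlinarith [chainLength_nonneg n u]

lemma le_chainPotential_self (hε : 0 ≤ ε) (hθ : 0 ≤ θ) : ε ≤ chainPotential ε θ x x :=
  le_chainPotential hε hθ (.inr ⟨0, fun _ => x, ⟨rfl, rfl, by simp⟩, by simp [chainLength]⟩)

lemma chainPotential_le_add (hε : 0 ≤ ε) (hθ : 0 ≤ θ) (hzw : dist z w ≤ ε) :
    chainPotential ε θ x z ≤ chainPotential ε θ x w + θ * dist z w := by
  refine chainPotential_le_of_forall
    (add_nonneg (chainPotential_nonneg hε hθ) (mul_nonneg hθ dist_nonneg)) fun n u hu => ?_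
  have := le_chainPotential hε hθ (.inr ⟨_, _, hu.update_succ hzw, rfl⟩)
  rw [chainLength_update_succ, hu.2.1] at this
  linarith

lemma lipschitzWith_one_chainPotential (hε : 0 ≤ ε) (hθ₀ : 0 ≤ θ) (hθ₁ : θ ≤ 1) :
    LipschitzWith 1 (chainPotential ε θ x) := by
  refine LipschitzWith.of_le_add_mul 1 fun z w => ?_
  rw [NNReal.coe_one, one_mul]
  rcases le_or_gt (dist z w) ε with hzw | hzw
  · nlinarith [chainPotential_le_add (x := x) hε hθ₀ hzw, dist_nonneg (x := z) (y := w)]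
  · linarith [chainPotential_le (x := x) (z := z) hε hθ₀,
      chainPotential_nonneg (x := x) (z := w) hε hθ₀]

end Potential

section LocalDelta

variable {M : Type*}

lemma exists_steep_pair_of_approx_midpoints [PseudoMetricSpace M] {f : M → ℝ} {θ η : ℝ}
    (hθ : 0 ≤ θ) (hη : 0 ≤ η)
    (hmid : ∀ a b : M, a ≠ b →
      (closedBall a ((1 + η) * dist a b / 2) ∩ closedBall b ((1 + η) * dist a b / 2)).Nonempty) :
    ∀ (N : ℕ) {a b : M}, θ * (1 + η) ^ N * dist a b < f a - f b →
      ∃ u v, dist u v ≤ ((1 + η) / 2) ^ N * dist a b ∧ θ * dist u v < f u - f v := by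
  intro N
  induction N with
  | zero => exact fun {a b} h => ⟨a, b, by simp, by simpa using h⟩
  | succ N ih =>
    intro a b h
    have hab : a ≠ b := by rintro rfl; simp at h
    obtain ⟨z, hza, hzb⟩ := hmid a b hab
    rw [mem_closedBall] at hza hzb
    obtain ⟨p, q, hpq, hslope⟩ : ∃ p q, dist p q ≤ (1 + η) / 2 * dist a b ∧
        θ * (1 + η) ^ N * dist p q < f p - f q := by
      by_contra! hflat
      have haz := hflat a z (by rw [dist_comm]; linarith)
      have hzb' := hflat z b (by linarith)
      have : θ * (1 + η) ^ N * (dist a z + dist z b) ≤ θ * (1 + η) ^ N * ((1 + η) * dist a b) :=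
        mul_le_mul_of_nonneg_left (by rw [dist_comm a z]; linarith) (by positivity)
      rw [pow_succ] at h
      linarith
    obtain ⟨u, v, huv, hslope'⟩ := ih hslope
    refine ⟨u, v, huv.trans ?_, hslope'⟩
    calc ((1 + η) / 2) ^ N * dist p q ≤ ((1 + η) / 2) ^ N * ((1 + η) / 2 * dist a b) := by gcongr
      _ = ((1 + η) / 2) ^ (N + 1) * dist a b := by ring

variable [MetricSpace M]

lemma localDeltaCondition_of_approx_midpoints
    (hmid : ∀ x y : M, x ≠ y → ∀ δ : ℝ, 0 < δ →
      (closedBall x ((1 + δ) * dist x y / 2) ∩ closedBall y ((1 + δ) * dist x y / 2)).Nonempty)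
    (x y : M) : LocalDeltaCondition x y := by
  intro f _ θ hθ _ hgap ε hε
  obtain ⟨N, hN⟩ : ∃ N : ℕ, (3 / 4 : ℝ) ^ N * dist x y < ε := by
    have := (tendsto_pow_atTop_nhds_zero_of_lt_one (by norm_num : (0 : ℝ) ≤ 3 / 4)
      (by norm_num)).mul_const (dist x y)
    rw [zero_mul] at this
    exact (this.eventually (gt_mem_nhds hε)).exists
  have hcont : Tendsto (fun η : ℝ => θ * (1 + η) ^ N * dist x y) (𝓝[>] 0) (𝓝 (θ * dist x y)) := by
    have : Continuous fun η : ℝ => θ * (1 + η) ^ N * dist x y := by fun_prop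
    simpa using (this.tendsto 0).mono_left nhdsWithin_le_nhds
  obtain ⟨η, hηgap, hη₀, hη₁⟩ :=
    ((hcont.eventually_lt_const hgap).and (Ioo_mem_nhdsGT (by norm_num : (0 : ℝ) < 1 / 2))).exists
  obtain ⟨u, v, huv, hslope⟩ := exists_steep_pair_of_approx_midpoints hθ.le hη₀.le
    (fun a b hab => hmid a b hab η hη₀) N hηgap
  have hne : u ≠ v := by rintro rfl; simp at hslope
  refine ⟨u, v, dist_pos.2 hne, ?_, hslope⟩
  calc dist u v ≤ ((1 + η) / 2) ^ N * dist x y := huv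
    _ ≤ (3 / 4) ^ N * dist x y :=
      mul_le_mul_of_nonneg_right (pow_le_pow_left₀ (by positivity) (by linarith) N) dist_nonneg
    _ < ε := hN

lemma nonempty_closedBall_inter_of_localDeltaCondition {x y : M} (hxy : x ≠ y)
    (hΔ : LocalDeltaCondition x y) {δ : ℝ} (hδ : 0 < δ) :
    (closedBall x ((1 + δ) * dist x y / 2) ∩ closedBall y ((1 + δ) * dist x y / 2)).Nonempty := by
  rw [← Set.not_disjoint_iff_nonempty_inter]
  intro hdisj
  have hd : 0 < dist x y := dist_pos.2 hxy
  set ε := δ * dist x y / 4 with hε_def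
  set θ := min (δ / 8) (1 / 2)
  have hε : 0 < ε := by positivity
  have hθ₀ : 0 < θ := by positivity
  have hθ₁ : θ < 1 := (min_le_right _ _).trans_lt (by norm_num)
  have hθδ : θ ≤ δ / 8 := min_le_left _ _
  set f := chainPotential ε θ x
  have hfy : f y ≤ max 0 (ε - θ * ((1 + δ / 2) * dist x y)) :=
    chainPotential_le_of_forall (le_max_left _ _) fun n u hu => by
      have hlen := hu.two_mul_sub_lt_chainLength hε.le hdisj
      have : θ * ((1 + δ / 2) * dist x y) ≤ θ * chainLength n u :=
        mul_le_mul_of_nonneg_left (by linarith) hθ₀.le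
      exact le_max_of_le_right (by linarith)
  have hgap : θ * dist x y < f x - f y := by
    have hfx : ε ≤ f x := le_chainPotential_self hε.le hθ₀.le
    have hθd : θ * dist x y < ε := by
      nlinarith [mul_le_mul_of_nonneg_right hθδ hd.le, mul_pos hδ hd]
    have : θ * dist x y < θ * ((1 + δ / 2) * dist x y) := by
      nlinarith [mul_pos hθ₀ (mul_pos hδ hd)]
    rcases max_cases 0 (ε - θ * ((1 + δ / 2) * dist x y)) with ⟨hmax, -⟩ | ⟨hmax, -⟩ <;>
      linarith
  obtain ⟨u, v, -, huv, hslope⟩ :=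
    hΔ f (lipschitzWith_one_chainPotential hε.le hθ₀.le hθ₁.le) θ hθ₀ hθ₁ hgap ε hε
  linarith [chainPotential_le_add (x := x) hε.le hθ₀.le huv.le]

end LocalDelta

theorem length_iff_all_molecules_delta_general {M : Type*} [MetricSpace M] :
    (∀ x y : M, x ≠ y → ∀ δ : ℝ, 0 < δ →
      (Metric.closedBall x ((1 + δ) * dist x y / 2) ∩
        Metric.closedBall y ((1 + δ) * dist x y / 2)).Nonempty)
    ↔ (∀ x y : M, x ≠ y → LocalDeltaCondition x y) :=
  ⟨fun hmid x y _ => localDeltaCondition_of_approx_midpoints hmid x y,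
    fun hΔ _ _ hxy _ hδ => nonempty_closedBall_inter_of_localDeltaCondition hxy (hΔ _ _ hxy) hδ⟩

/-- A complete metric space is a length space if and only if every pair of distinct
points satisfies the local Δ-condition. -/
theorem length_iff_all_molecules_delta {M : Type*} [MetricSpace M] [CompleteSpace M] :
    (∀ x y : M, x ≠ y → ∀ δ : ℝ, 0 < δ →
      (Metric.closedBall x ((1 + δ) * dist x y / 2) ∩
        Metric.closedBall y ((1 + δ) * dist x y / 2)).Nonempty)
    ↔ (∀ x y : M, x ≠ y → LocalDeltaCondition x y) :=
  length_iff_all_molecules_delta_general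
end

section
/- Let M := {−1} ∪ [0, 1] ⊆ ℝ, equipped with the metric d(a, b) = |a − b|, and let x = 1 and y = 0. Then for all u, v ∈ M with u ≠ v such that every z ∈ M with d(u, z) + d(z, v) = d(u, v) satisfies z ∈ {u, v}, one has d(x, y) + d(u, v) ≤ min{d(x, u) + d(y, v), d(x, v) + d(y, u)}. (By the paper's characterization of Daugavet points in Lipschitz-free spaces over compact metric spaces, the molecule m_{1,0} is therefore a Daugavet point, although M is not a length space.) -/
/-!
On the real line `d(u, z) + d(z, v) = d(u, v)` says exactly that `z` lies between `u` and `v`.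
Two distinct points of `[0, 1]` always have a third point of `[0, 1]` between them, and `0` lies
between `-1` and any point of `[0, 1]`. Hence the only pair of distinct points of
`M = {-1} ∪ [0, 1]` whose segment in `M` is trivial is `{-1, 0}`, and for it both sides of the
inequality equal `2`.
-/

open Set

theorem Real.dist_add_dist_eq_iff_mem_uIcc {a b z : ℝ} :
    dist a z + dist z b = dist a b ↔ z ∈ uIcc a b := by
  rw [dist_add_dist_eq_iff, ← mem_segment_iff_wbtw, segment_eq_uIcc]

theorem Set.OrdConnected.eq_of_forall_mem_uIcc {α : Type*} [LinearOrder α] [DenselyOrdered α]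
    {S : Set α} (hS : S.OrdConnected) {a b : α} (ha : a ∈ S) (hb : b ∈ S)
    (h : ∀ z ∈ S, z ∈ uIcc a b → z = a ∨ z = b) : a = b := by
  by_contra hab
  obtain ⟨c, hc⟩ := nonempty_uIoo.2 hab
  have hc' : c ∈ uIcc a b := uIoo_subset_uIcc_self hc
  rcases h c (hS.uIcc_subset ha hb hc') hc' with rfl | rfl <;> simp at hc

theorem eq_neg_one_zero_of_forall_mem_uIcc {u v : ℝ} (hu : u ∈ ({-1} ∪ Icc 0 1 : Set ℝ))
    (hv : v ∈ ({-1} ∪ Icc 0 1 : Set ℝ)) (hne : u ≠ v)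
    (h : ∀ z ∈ ({-1} ∪ Icc 0 1 : Set ℝ), z ∈ uIcc u v → z = u ∨ z = v) :
    (u = -1 ∧ v = 0) ∨ (u = 0 ∧ v = -1) := by
  have hzero : (0 : ℝ) ∈ ({-1} ∪ Icc 0 1 : Set ℝ) := Or.inr ⟨le_rfl, zero_le_one⟩
  rcases hu with rfl | hu <;> rcases hv with rfl | hv
  · exact absurd rfl hne
  · have := h 0 hzero (mem_uIcc.2 (Or.inl ⟨by norm_num, hv.1⟩))
    exact Or.inl ⟨rfl, (this.resolve_left (by norm_num)).symm⟩
  · have := h 0 hzero (mem_uIcc.2 (Or.inr ⟨by norm_num, hu.1⟩))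
    exact Or.inr ⟨(this.resolve_right (by norm_num)).symm, rfl⟩
  · exact absurd (ordConnected_Icc.eq_of_forall_mem_uIcc hu hv
      fun z hz hzuv => h z (Or.inr hz) hzuv) hne

/-- In `M = {-1} ∪ [0,1] ⊆ ℝ` with `x = 1`, `y = 0`: for every pair `u ≠ v` in `M`
whose metric segment in `M` is `{u, v}`, one has
`d(x,y) + d(u,v) ≤ min (d(x,u) + d(y,v)) (d(x,v) + d(y,u))`; hence `m_{1,0}` is a
Daugavet point of the Lipschitz-free space over `M`. -/
theorem daugavet_point_example :
    ∀ u ∈ ({-1} ∪ Set.Icc 0 1 : Set ℝ), ∀ v ∈ ({-1} ∪ Set.Icc 0 1 : Set ℝ), u ≠ v →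
      (∀ z ∈ ({-1} ∪ Set.Icc 0 1 : Set ℝ),
        dist u z + dist z v = dist u v → z = u ∨ z = v) →
      dist (1 : ℝ) 0 + dist u v ≤
        min (dist 1 u + dist 0 v) (dist 1 v + dist 0 u) := by
  intro u hu v hv hne hseg
  rcases eq_neg_one_zero_of_forall_mem_uIcc hu hv hne
    fun z hz hzuv => hseg z hz (Real.dist_add_dist_eq_iff_mem_uIcc.2 hzuv)
    with ⟨rfl, rfl⟩ | ⟨rfl, rfl⟩ <;> norm_num [Real.dist_eq]
end
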